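/- Let k ≥ 2 and let A = A_k ⋯ A_1 be a factorization of a contraction A into contractions A_i : H_i → H_{i+1}. If the defect space 𝒟_A is finite-dimensional, then the factorization A = A_k ⋯ A_1 is k-regular if and only if dim 𝒟_A = Σ_{i=1}^{k} dim 𝒟_{A_i}. -/

import Mathlib

noncomputable section

open ContinuousLinearMap

/-- The defect operator `D_A = (I - A*A)^{1/2}` of a contraction `A`. -/
def defectOp {E F : Type*} [NormedAddCommGroup E] [InnerProductSpace ℂ E]
    [CompleteSpace E] [NormedAddCommGroup F] [InnerProductSpace ℂ F] [CompleteSpace F]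
    (A : E →L[ℂ] F) : E →L[ℂ] E :=
  CFC.sqrt (1 - (adjoint A).comp A)

/-- The defect space `𝒟_A`, the closure of the range of the defect operator. -/
def defectSpace {E F : Type*} [NormedAddCommGroup E] [InnerProductSpace ℂ E]
    [CompleteSpace E] [NormedAddCommGroup F] [InnerProductSpace ℂ F] [CompleteSpace F]
    (A : E →L[ℂ] F) : Submodule ℂ E :=
  (LinearMap.range (defectOp A : E →ₗ[ℂ] E)).topologicalClosure

theorem defectOp_mem {E F : Type*} [NormedAddCommGroup E] [InnerProductSpace ℂ E]
    [CompleteSpace E] [NormedAddCommGroup F] [InnerProductSpace ℂ F] [CompleteSpace F]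
    (A : E →L[ℂ] F) (x : E) : defectOp A x ∈ defectSpace A :=
  Submodule.le_topologicalClosure _ (LinearMap.mem_range_self _ x)

variable {H : ℕ → Type*} [∀ n, NormedAddCommGroup (H n)] [∀ n, InnerProductSpace ℂ (H n)]
  [∀ n, CompleteSpace (H n)]

/-- The product `A_{a+l-1} ⋯ A_{a+1} A_a : H a → H (a+l)` of a chain of operators. -/
def prodLen (A : ∀ n, H n →L[ℂ] H (n + 1)) (a : ℕ) : ∀ l : ℕ, H a →L[ℂ] H (a + l)
  | 0 => ContinuousLinearMap.id ℂ (H a)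
  | l + 1 => (A (a + l)).comp (prodLen A a l)

/-- The product `A_{b-1} ⋯ A_{a+1} A_a : H a → H b` (junk value `0` if `b < a`). -/
def prodSeg (A : ∀ n, H n →L[ℂ] H (n + 1)) (a b : ℕ) : H a →L[ℂ] H b :=
  if h : a ≤ b then (Nat.add_sub_cancel' h ▸ prodLen A a (b - a)) else 0

/-- The tuple `(D_{A_k} A_{k-1} ⋯ A_1 h, …, D_{A_2} A_1 h, D_{A_1} h)` (with zero-based
indexing: component `i` is `D_{A i} (A_{i-1} ⋯ A_0 h)`), viewed as an element of the
Hilbert (ℓ²) direct sum of the defect spaces. -/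
def defectTuple (A : ∀ n, H n →L[ℂ] H (n + 1)) (k : ℕ) (h : H 0) :
    PiLp 2 (fun i : Fin k => ↥(defectSpace (A i))) :=
  WithLp.toLp 2 (fun i => ⟨defectOp (A i) (prodSeg A 0 i h), defectOp_mem _ _⟩)

/-- The factorization `A = A_{k-1} ⋯ A_0` is `k`-regular if the set of defect tuples is dense
in the Hilbert direct sum of the defect spaces. -/
def IsRegularFactorization (A : ∀ n, H n →L[ℂ] H (n + 1)) (k : ℕ) : Prop :=
  Dense (Set.range (defectTuple A k))

/-- A two-factor factorization `A = B ∘ C` is `2`-regular if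
`{ D_B (C h) ⊕ D_C h : h }` is dense in `𝒟_B ⊕ 𝒟_C`. -/
def IsRegularPair {E F G : Type*} [NormedAddCommGroup E] [InnerProductSpace ℂ E]
    [CompleteSpace E] [NormedAddCommGroup F] [InnerProductSpace ℂ F] [CompleteSpace F]
    [NormedAddCommGroup G] [InnerProductSpace ℂ G] [CompleteSpace G]
    (B : F →L[ℂ] G) (C : E →L[ℂ] F) : Prop :=
  Dense (Set.range fun h : E =>
    ((WithLp.equiv 2 (↥(defectSpace B) × ↥(defectSpace C))).symm
      (⟨defectOp B (C h), defectOp_mem _ _⟩, ⟨defectOp C h, defectOp_mem _ _⟩)))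

end

/-!
The defect tuple `T h = (D_{A_i} A_{i-1} ⋯ A_1 h)_i` satisfies
`‖T h‖² = ∑ (‖A_{i-1} ⋯ A_1 h‖² - ‖A_i ⋯ A_1 h‖²) = ‖h‖² - ‖A h‖² = ‖D_A h‖²`, a telescoping
sum. Hence `T` and `D_A` have the same kernel, so the range of `T` is linearly isomorphic to the
range of `D_A`, which is `𝒟_A` because `𝒟_A` is finite-dimensional. A finite-dimensional range
is closed, so `T` has dense range iff it is onto `𝒟_{A_k} ⊕ ⋯ ⊕ 𝒟_{A_1}`, i.e. iff the
dimensions agree; in finite dimension a Hilbert basis has exactly `finrank` elements.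
-/

open ContinuousLinearMap Module

section LinearAlgebra

lemma LinearMap.ker_eq_ker_of_norm_eq {𝕜 E F G : Type*} [NormedField 𝕜]
    [SeminormedAddCommGroup E] [NormedAddCommGroup F] [NormedAddCommGroup G]
    [NormedSpace 𝕜 E] [NormedSpace 𝕜 F] [NormedSpace 𝕜 G]
    {f : E →ₗ[𝕜] F} {g : E →ₗ[𝕜] G} (h : ∀ x, ‖f x‖ = ‖g x‖) : ker f = ker g := by
  ext x
  rw [LinearMap.mem_ker, LinearMap.mem_ker, ← norm_eq_zero, h, norm_eq_zero]

noncomputable def LinearMap.rangeEquivRangeOfKerEq {R M M₂ M₃ : Type*} [Ring R]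
    [AddCommGroup M] [AddCommGroup M₂] [AddCommGroup M₃] [Module R M] [Module R M₂] [Module R M₃]
    (f : M →ₗ[R] M₂) (g : M →ₗ[R] M₃) (h : ker f = ker g) : range f ≃ₗ[R] range g :=
  f.quotKerEquivRange.symm.trans ((Submodule.quotEquivOfEq _ _ h).trans g.quotKerEquivRange)

lemma Submodule.eq_top_iff_finiteDimensional_and_finrank_eq {K M : Type*} [DivisionRing K]
    [AddCommGroup M] [Module K M] (V : Submodule K M) [FiniteDimensional K V] :
    V = ⊤ ↔ FiniteDimensional K M ∧ finrank K V = finrank K M := by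
  refine ⟨fun h => ?_, fun ⟨_, h⟩ => Submodule.eq_top_of_finrank_eq h⟩
  subst h
  exact ⟨(Submodule.topEquiv (R := K) (M := M)).finiteDimensional, finrank_top K M⟩

lemma PiLp.finiteDimensional_iff {ι 𝕜 : Type*} [Finite ι] [DivisionRing 𝕜] (p : ENNReal)
    (F : ι → Type*) [∀ i, AddCommGroup (F i)] [∀ i, Module 𝕜 (F i)] :
    FiniteDimensional 𝕜 (PiLp p F) ↔ ∀ i, FiniteDimensional 𝕜 (F i) :=
  (Module.Finite.equiv_iff (WithLp.linearEquiv p 𝕜 (∀ i, F i))).trans Module.Finite.pi_iff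

lemma PiLp.finrank_eq_sum {ι 𝕜 : Type*} [Fintype ι] [DivisionRing 𝕜] (p : ENNReal)
    (F : ι → Type*) [∀ i, AddCommGroup (F i)] [∀ i, Module 𝕜 (F i)]
    [∀ i, FiniteDimensional 𝕜 (F i)] :
    finrank 𝕜 (PiLp p F) = ∑ i, finrank 𝕜 (F i) :=
  (WithLp.linearEquiv p 𝕜 (∀ i, F i)).finrank_eq.trans (Module.finrank_pi_fintype 𝕜)

variable {𝕜 E : Type*} [NontriviallyNormedField 𝕜] [CompleteSpace 𝕜] [NormedAddCommGroup E]
  [NormedSpace 𝕜 E]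

lemma Submodule.dense_iff_eq_top_of_finiteDimensional (V : Submodule 𝕜 E)
    [FiniteDimensional 𝕜 V] : Dense (V : Set E) ↔ V = ⊤ := by
  rw [Submodule.dense_iff_topologicalClosure_eq_top,
    V.closed_of_finiteDimensional.submodule_topologicalClosure_eq]

lemma Submodule.topologicalClosure_eq_self_of_finiteDimensional (V : Submodule 𝕜 E)
    [FiniteDimensional 𝕜 V.topologicalClosure] : V.topologicalClosure = V :=
  have := Submodule.finiteDimensional_of_le V.le_topologicalClosure
  V.closed_of_finiteDimensional.submodule_topologicalClosure_eq

end LinearAlgebra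

namespace HilbertBasis

variable {ι 𝕜 E : Type*} [RCLike 𝕜] [NormedAddCommGroup E] [InnerProductSpace 𝕜 E]

lemma finite_iff_finiteDimensional (b : HilbertBasis ι 𝕜 E) :
    Finite ι ↔ FiniteDimensional 𝕜 E := by
  refine ⟨fun _ => ?_, fun _ => b.orthonormal.linearIndependent.finite⟩
  have := Fintype.ofFinite ι
  exact b.toOrthonormalBasis.toBasis.finiteDimensional_of_finite

lemma natCard_eq_finrank [FiniteDimensional 𝕜 E] (b : HilbertBasis ι 𝕜 E) :
    Nat.card ι = finrank 𝕜 E := by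
  have := b.finite_iff_finiteDimensional.mpr ‹_›
  have := Fintype.ofFinite ι
  rw [Nat.card_eq_fintype_card, finrank_eq_card_basis b.toOrthonormalBasis.toBasis]

end HilbertBasis

universe u in
lemma forall_hilbertBasis_mk_eq_sum_iff {𝕜 : Type*} [RCLike 𝕜] {ι' : Type} [Fintype ι']
    {E : Type u} [NormedAddCommGroup E] [InnerProductSpace 𝕜 E] [FiniteDimensional 𝕜 E]
    (F : ι' → Type u) [∀ i, NormedAddCommGroup (F i)] [∀ i, InnerProductSpace 𝕜 (F i)]
    [∀ i, CompleteSpace (F i)] :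
    (∀ (ι : Type u) (_ : HilbertBasis ι 𝕜 E) (κ : ι' → Type u)
        (_ : ∀ i, HilbertBasis (κ i) 𝕜 (F i)),
        Cardinal.mk ι = Cardinal.sum fun i => Cardinal.mk (κ i)) ↔
      (∀ i, FiniteDimensional 𝕜 (F i)) ∧ finrank 𝕜 E = ∑ i, finrank 𝕜 (F i) := by
  have mk_eq (ι : Type u) (b : HilbertBasis ι 𝕜 E) : Cardinal.mk ι = finrank 𝕜 E := by
    have := b.finite_iff_finiteDimensional.mpr ‹_›
    rw [← Nat.cast_card, b.natCard_eq_finrank]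
  constructor
  · intro h
    have := FiniteDimensional.complete 𝕜 E
    obtain ⟨w, b, -⟩ := exists_hilbertBasis 𝕜 E
    choose s c _ using fun i => exists_hilbertBasis 𝕜 (F i)
    have hsum := h w b (fun i => s i) c
    rw [mk_eq w b] at hsum
    have hfin (i : ι') : Finite (s i) := Cardinal.lt_aleph0_iff_finite.mp <|
      (Cardinal.le_sum _ i).trans_lt (hsum.symm.trans_lt Cardinal.natCast_lt_aleph0)
    have hFD (i : ι') : FiniteDimensional 𝕜 (F i) :=
      (c i).finite_iff_finiteDimensional.mp (hfin i)
    refine ⟨hFD, ?_⟩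
    rw [← Cardinal.mk_sigma, ← Nat.cast_card, Nat.card_sigma] at hsum
    simpa only [fun i => (c i).natCard_eq_finrank] using Nat.cast_injective hsum
  · rintro ⟨hFD, hdim⟩ ι b κ c
    have (i : ι') : Finite (κ i) := (c i).finite_iff_finiteDimensional.mpr (hFD i)
    rw [mk_eq ι b, ← Cardinal.mk_sigma, ← Nat.cast_card, Nat.card_sigma, hdim]
    simp only [fun i => (c i).natCard_eq_finrank]

section Defect

variable {E F : Type*} [NormedAddCommGroup E] [InnerProductSpace ℂ E] [CompleteSpace E]
  [NormedAddCommGroup F] [InnerProductSpace ℂ F] [CompleteSpace F] {B : E →L[ℂ] F}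

lemma one_sub_adjoint_comp_self_nonneg (hB : ‖B‖ ≤ 1) : 0 ≤ 1 - (adjoint B).comp B := by
  rw [sub_nonneg, ← CStarAlgebra.norm_le_one_iff_of_nonneg _
    ((nonneg_iff_isPositive _).mpr (isPositive_adjoint_comp_self B)), norm_adjoint_comp_self]
  exact mul_le_one₀ hB (norm_nonneg B) hB

lemma defectOp_comp_defectOp (hB : ‖B‖ ≤ 1) :
    (defectOp B).comp (defectOp B) = 1 - (adjoint B).comp B :=
  (sq _).symm.trans (CFC.sq_sqrt _ (one_sub_adjoint_comp_self_nonneg hB))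

lemma norm_defectOp_apply_sq (hB : ‖B‖ ≤ 1) (x : E) :
    ‖defectOp B x‖ ^ 2 = ‖x‖ ^ 2 - ‖B x‖ ^ 2 := by
  have hD : adjoint (defectOp B) = defectOp B :=
    (IsSelfAdjoint.of_nonneg (CFC.sqrt_nonneg _)).adjoint_eq
  rw [apply_norm_sq_eq_inner_adjoint_left, hD, defectOp_comp_defectOp hB,
    apply_norm_sq_eq_inner_adjoint_left B, sub_apply, one_apply_eq_self, inner_sub_left, map_sub,
    ← norm_sq_eq_re_inner (𝕜 := ℂ)]

instance : CompleteSpace (defectSpace B) :=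
  Submodule.topologicalClosure.completeSpace _

lemma defectSpace_eq_range [FiniteDimensional ℂ (defectSpace B)] :
    defectSpace B = LinearMap.range (defectOp B : E →ₗ[ℂ] E) := by
  have : FiniteDimensional ℂ (LinearMap.range (defectOp B : E →ₗ[ℂ] E)).topologicalClosure := ‹_›
  exact Submodule.topologicalClosure_eq_self_of_finiteDimensional _

end Defect

section Chain

variable {H : ℕ → Type*} [∀ n, NormedAddCommGroup (H n)] [∀ n, InnerProductSpace ℂ (H n)]
  (A : ∀ n, H n →L[ℂ] H (n + 1))

lemma prodSeg_zero_zero : prodSeg A 0 0 = ContinuousLinearMap.id ℂ (H 0) := rfl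

lemma prodSeg_zero_succ (b : ℕ) : prodSeg A 0 (b + 1) = (A b).comp (prodSeg A 0 b) := by
  have comp_cast {m n : ℕ} (e : m = n) (T : H 0 →L[ℂ] H m) :
      (A n).comp (e ▸ T) = congrArg (· + 1) e ▸ (A m).comp T := by
    cases e; rfl
  simp only [prodSeg, dif_pos (Nat.zero_le _), comp_cast]
  rfl

lemma norm_prodSeg_zero_le {b : ℕ} (hA : ∀ i < b, ‖A i‖ ≤ 1) : ‖prodSeg A 0 b‖ ≤ 1 := by
  induction b with
  | zero => exact norm_id_le
  | succ b ih =>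
    rw [prodSeg_zero_succ]
    exact (opNorm_comp_le _ _).trans <| mul_le_one₀ (hA b b.lt_succ_self) (norm_nonneg _)
      (ih fun i hi => hA i (hi.trans b.lt_succ_self))

variable [∀ n, CompleteSpace (H n)]

noncomputable def defectTupleₗ (k : ℕ) :
    H 0 →ₗ[ℂ] PiLp 2 (fun i : Fin k => defectSpace (A i)) :=
  (WithLp.linearEquiv 2 ℂ _).symm.toLinearMap ∘ₗ LinearMap.pi fun i =>
    ((defectOp (A i)).comp (prodSeg A 0 i) : H 0 →ₗ[ℂ] H i).codRestrict _
      fun _ => defectOp_mem _ _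

lemma coe_defectTupleₗ (k : ℕ) : ⇑(defectTupleₗ A k) = defectTuple A k := rfl

variable {A}

lemma norm_defectTuple_sq {k : ℕ} (hA : ∀ i < k, ‖A i‖ ≤ 1) (h : H 0) :
    ‖defectTuple A k h‖ ^ 2 = ‖h‖ ^ 2 - ‖prodSeg A 0 k h‖ ^ 2 := by
  have norm_apply_sq (i : Fin k) : ‖defectTuple A k h i‖ ^ 2
      = ‖prodSeg A 0 i h‖ ^ 2 - ‖prodSeg A 0 (i + 1) h‖ ^ 2 := by
    rw [prodSeg_zero_succ, comp_apply, ← norm_defectOp_apply_sq (hA i i.isLt)]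
    rfl
  rw [PiLp.norm_sq_eq_of_L2, Fintype.sum_congr _ _ norm_apply_sq,
    Fin.sum_univ_eq_sum_range (fun i => ‖prodSeg A 0 i h‖ ^ 2 - ‖prodSeg A 0 (i + 1) h‖ ^ 2),
    Finset.sum_range_sub', prodSeg_zero_zero, id_apply]

lemma norm_defectTuple_eq {k : ℕ} (hA : ∀ i < k, ‖A i‖ ≤ 1) (h : H 0) :
    ‖defectTuple A k h‖ = ‖defectOp (prodSeg A 0 k) h‖ := by
  rw [← sq_eq_sq₀ (norm_nonneg _) (norm_nonneg _), norm_defectTuple_sq hA,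
    norm_defectOp_apply_sq (norm_prodSeg_zero_le A hA)]

end Chain

universe u in
/-- For a factorization `A = A_k ⋯ A_1` into contractions with
finite-dimensional defect space `𝒟_A`, the factorization is `k`-regular iff
`dim 𝒟_A = Σ_{i=1}^{k} dim 𝒟_{A_i}` (dimensions being cardinalities of Hilbert bases). -/
theorem statement14 {H : ℕ → Type u} [∀ n, NormedAddCommGroup (H n)]
    [∀ n, InnerProductSpace ℂ (H n)] [∀ n, CompleteSpace (H n)]
    (k : ℕ) (hk : 2 ≤ k) (A : ∀ n, H n →L[ℂ] H (n + 1))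
    (hA : ∀ i : Fin k, ‖A (i : ℕ)‖ ≤ 1)
    (hfin : FiniteDimensional ℂ ↥(defectSpace (prodSeg A 0 k))) :
    IsRegularFactorization A k ↔
      ∀ (ι : Type u) (_ : HilbertBasis ι ℂ ↥(defectSpace (prodSeg A 0 k)))
        (κ : Fin k → Type u) (_ : ∀ i : Fin k, HilbertBasis (κ i) ℂ ↥(defectSpace (A (i : ℕ)))),
        Cardinal.mk ι = Cardinal.sum (fun i : Fin k => Cardinal.mk (κ i)) := by
  let T := defectTupleₗ A k
  have e : LinearMap.range T ≃ₗ[ℂ] defectSpace (prodSeg A 0 k) :=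
    (LinearMap.rangeEquivRangeOfKerEq _ _ (LinearMap.ker_eq_ker_of_norm_eq
      (norm_defectTuple_eq fun i hi => hA ⟨i, hi⟩))).trans
      (LinearEquiv.ofEq _ _ defectSpace_eq_range.symm)
  have := e.symm.finiteDimensional
  calc IsRegularFactorization A k ↔ LinearMap.range T = ⊤ := by
        rw [IsRegularFactorization, ← coe_defectTupleₗ, ← LinearMap.coe_range]
        exact (LinearMap.range T).dense_iff_eq_top_of_finiteDimensional
    _ ↔ _ := (LinearMap.range T).eq_top_iff_finiteDimensional_and_finrank_eq
    _ ↔ (∀ i : Fin k, FiniteDimensional ℂ (defectSpace (A i))) ∧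
        finrank ℂ (defectSpace (prodSeg A 0 k)) = ∑ i : Fin k, finrank ℂ (defectSpace (A i)) := by
      rw [PiLp.finiteDimensional_iff, e.finrank_eq]
      exact and_congr_right fun _ => by rw [PiLp.finrank_eq_sum]
    _ ↔ _ := (forall_hilbertBasis_mk_eq_sum_iff _).symm
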